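/- arXiv:1512.06667 — 5 statements merged into one kernel-verified Lean document; each statement's English description precedes it below -/
import Mathlib

section
/- Let G = I - α v vᵀ be an n×n positive-definite matrix where v ∈ ℝⁿ has unit norm and 0 ≤ α < 1. If a* ∈ ℤⁿ \ {0} minimizes aᵀ G a over nonzero integer vectors, then either there exists x ∈ ℝ such that a* - (1/2)·𝟙 < v·x < a* + (1/2)·𝟙 componentwise (hence a* = ⌈v·x⌋, the componentwise nearest integer), or a* equals ± a standard unit vector. -/
/-!
Write `Q(c) = c ⬝ᵥ c - α (v ⬝ᵥ c)²` for the quadratic form of `G`. Moving `a` by `±eᵢ` changes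
`Q` by `±2 (aᵢ - vᵢ x) + 1 - α vᵢ²` with `x = α (v ⬝ᵥ a)`, so if both moves stay nonzero, minimality
gives `2 |aᵢ - vᵢ x| ≤ 1 - α vᵢ²`. This is strict unless `α vᵢ = 0`, and then `vᵢ x = 0` while
the integer `aᵢ` has `|aᵢ| ≤ 1/2`, so `aᵢ = 0`. The moves can only hit `0` when `a = ±eᵢ`.
-/

open Matrix BigOperators

namespace Matrix

variable {ι R : Type*} [Fintype ι] [DecidableEq ι]

theorem dotProduct_one_sub_smul_vecMulVec_mulVec [CommRing R] (α : R) (v c : ι → R) :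
    c ⬝ᵥ (1 - α • vecMulVec v v) *ᵥ c = c ⬝ᵥ c - α * (v ⬝ᵥ c) ^ 2 := by
  simp only [sub_mulVec, one_mulVec, smul_mulVec, vecMulVec_mulVec, dotProduct_sub,
    dotProduct_smul, dotProduct_comm c v, smul_eq_mul, op_smul_eq_mul]
  ring

theorem quadForm_add_smul_single [CommRing R] (α s : R) (v c : ι → R) (i : ι) :
    (c + s • Pi.single i 1) ⬝ᵥ (c + s • Pi.single i 1) - α * (v ⬝ᵥ (c + s • Pi.single i 1)) ^ 2
      = c ⬝ᵥ c - α * (v ⬝ᵥ c) ^ 2 + 2 * s * (c i - v i * (α * (v ⬝ᵥ c)))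
        + s ^ 2 * (1 - α * v i ^ 2) := by
  simp only [add_dotProduct, dotProduct_add, smul_dotProduct, dotProduct_smul,
    single_dotProduct, dotProduct_single, smul_eq_mul, Pi.add_apply, Pi.smul_apply,
    Pi.single_eq_same, one_mul, mul_one]
  ring

theorem two_mul_abs_sub_le_of_le_add_smul_single {α : ℝ} {v c : ι → ℝ} {i : ι}
    (hmin : ∀ s : ℝ, s = 1 ∨ s = -1 → c ⬝ᵥ c - α * (v ⬝ᵥ c) ^ 2 ≤
      (c + s • Pi.single i 1) ⬝ᵥ (c + s • Pi.single i 1)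
        - α * (v ⬝ᵥ (c + s • Pi.single i 1)) ^ 2) :
    2 * |c i - v i * (α * (v ⬝ᵥ c))| ≤ 1 - α * v i ^ 2 := by
  have hplus := hmin 1 (Or.inl rfl)
  have hminus := hmin (-1) (Or.inr rfl)
  rw [quadForm_add_smul_single] at hplus hminus
  rw [← le_div_iff₀' two_pos, abs_le]
  constructor <;> linarith

theorem two_mul_abs_sub_le_of_forall_ne_zero_le {α : ℝ} {v : ι → ℝ} {a : ι → ℤ}
    (hmin : ∀ b : ι → ℤ, b ≠ 0 →
      (fun i => (a i : ℝ)) ⬝ᵥ (1 - α • vecMulVec v v) *ᵥ (fun i => (a i : ℝ)) ≤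
      (fun i => (b i : ℝ)) ⬝ᵥ (1 - α • vecMulVec v v) *ᵥ (fun i => (b i : ℝ)))
    {i : ι} (hne : a ≠ Pi.single i 1) (hne_neg : a ≠ -Pi.single i 1) :
    2 * |(a i : ℝ) - v i * (α * (v ⬝ᵥ fun j => (a j : ℝ)))| ≤ 1 - α * v i ^ 2 := by
  set A : ι → ℝ := fun j => (a j : ℝ)
  refine two_mul_abs_sub_le_of_le_add_smul_single (c := A) fun s hs => ?_
  obtain ⟨t, ht, rfl⟩ : ∃ t : ℤ, (t = 1 ∨ t = -1) ∧ (t : ℝ) = s := by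
    rcases hs with rfl | rfl
    exacts [⟨1, by simp⟩, ⟨-1, by simp⟩]
  have hstep : a + t • Pi.single i 1 ≠ 0 := by
    rcases ht with rfl | rfl <;> intro h
    · exact hne_neg (eq_neg_of_add_eq_zero_left (by simpa using h))
    · exact hne (sub_eq_zero.mp (by simpa [sub_eq_add_neg] using h))
  have hcast :
      (fun j => ((a + t • Pi.single i 1 : ι → ℤ) j : ℝ)) = A + (t : ℝ) • Pi.single i 1 := by
    funext j
    by_cases hj : j = i <;> simp [A, hj]
  have := hmin _ hstep
  rwa [hcast, dotProduct_one_sub_smul_vecMulVec_mulVec,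
    dotProduct_one_sub_smul_vecMulVec_mulVec] at this

end Matrix

theorem abs_intCast_sub_lt_half {m : ℤ} {y ε : ℝ} (h : 2 * |m - y| ≤ 1 - ε) (hε : 0 ≤ ε)
    (hy : ε = 0 → y = 0) : |m - y| < 1 / 2 := by
  rcases hε.lt_or_eq with hε | hε
  · linarith
  · obtain rfl := hy hε.symm
    have hm : |(m : ℝ)| < 1 := by rw [sub_zero] at h; linarith
    rw [← Int.cast_abs, ← Int.cast_one, Int.cast_lt, Int.abs_lt_one_iff] at hm
    simp [hm]

theorem stmt_0_general {n : ℕ} (v : Fin n → ℝ)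
    (α : ℝ) (hα0 : 0 ≤ α)
    (G : Matrix (Fin n) (Fin n) ℝ)
    (hG : G = 1 - α • Matrix.vecMulVec v v)
    (a : Fin n → ℤ)
    (hmin : ∀ b : Fin n → ℤ, b ≠ 0 →
      (fun i => (a i : ℝ)) ⬝ᵥ G.mulVec (fun i => (a i : ℝ)) ≤
      (fun i => (b i : ℝ)) ⬝ᵥ G.mulVec (fun i => (b i : ℝ))) :
    (∃ x : ℝ, (∀ i, (a i : ℝ) - 1/2 < v i * x ∧ v i * x < (a i : ℝ) + 1/2) ∧
      ∀ i, a i = round (v i * x)) ∨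
    (∃ j : Fin n, a = Pi.single j 1 ∨ a = -Pi.single j 1) := by
  subst hG
  by_cases hunit : ∃ j : Fin n, a = Pi.single j 1 ∨ a = -Pi.single j 1
  · exact Or.inr hunit
  push Not at hunit
  set x := α * (v ⬝ᵥ fun j => (a j : ℝ))
  have hclose : ∀ i, |(a i : ℝ) - v i * x| < 1 / 2 := fun i => by
    refine abs_intCast_sub_lt_half (ε := α * v i ^ 2)
      (two_mul_abs_sub_le_of_forall_ne_zero_le hmin (hunit i).1 (hunit i).2) (by positivity)
      fun h => ?_
    rcases mul_eq_zero.mp h with rfl | hv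
    · simp [x]
    · simp [pow_eq_zero_iff two_ne_zero |>.mp hv]
  have hbounds : ∀ i, (a i : ℝ) - 1/2 < v i * x ∧ v i * x < (a i : ℝ) + 1/2 := fun i => by
    have := abs_sub_lt_iff.mp (hclose i)
    constructor <;> linarith
  refine Or.inl ⟨x, hbounds, fun i => ?_⟩
  rw [eq_comm, round_eq_iff]
  exact ⟨(hbounds i).1.le, (hbounds i).2⟩

theorem stmt_0 {n : ℕ} (v : Fin n → ℝ) (hv : ∑ i, v i ^ 2 = 1)
    (α : ℝ) (hα0 : 0 ≤ α) (hα1 : α < 1)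
    (G : Matrix (Fin n) (Fin n) ℝ)
    (hG : G = 1 - α • Matrix.vecMulVec v v) (hGpd : G.PosDef)
    (a : Fin n → ℤ) (ha : a ≠ 0)
    (hmin : ∀ b : Fin n → ℤ, b ≠ 0 →
      (fun i => (a i : ℝ)) ⬝ᵥ G.mulVec (fun i => (a i : ℝ)) ≤
      (fun i => (b i : ℝ)) ⬝ᵥ G.mulVec (fun i => (b i : ℝ))) :
    (∃ x : ℝ, (∀ i, (a i : ℝ) - 1/2 < v i * x ∧ v i * x < (a i : ℝ) + 1/2) ∧
      ∀ i, a i = round (v i * x)) ∨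
    (∃ j : Fin n, a = Pi.single j 1 ∨ a = -Pi.single j 1) :=
  stmt_0_general v α hα0 G hG a hmin
end

section
/- Let G = I - V Vᵀ be positive definite, where V ∈ ℝ^{n×k}. If a* ∈ ℤⁿ \ {0} minimizes aᵀ G a over nonzero integer vectors, then either there exists x ∈ ℝᵏ such that a* - (1/2)·𝟙 < V x < a* + (1/2)·𝟙 componentwise (hence a* = ⌈V x⌋), or a* is ± a standard unit vector. -/
/-!
Take `x = Vᵀ a`, so that `a - V x = G a`. If `|(G a)ᵢ| ≥ 1/2` for some `i` while `a ≠ ±eᵢ`, then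
`a + eᵢ` and `a - eᵢ` are nonzero integer vectors, and comparing their `G`-values with that of `a`
gives `2 |(G a)ᵢ| ≤ Gᵢᵢ = 1 - ‖Vᵢ‖²`. Hence `Vᵢ = 0`, so `(G a)ᵢ = aᵢ` is an integer of absolute
value `1/2`, which is absurd.
-/

open Matrix

namespace Matrix

variable {ι R : Type*} [Fintype ι]

theorem dotProduct_mulVec_add_single [DecidableEq ι] [CommRing R] {G : Matrix ι ι R}
    (hG : G.IsSymm) (v : ι → R) (i : ι) (t : R) :
    (v + Pi.single i t) ⬝ᵥ G *ᵥ (v + Pi.single i t) =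
      v ⬝ᵥ G *ᵥ v + 2 * t * (G *ᵥ v) i + t * t * G i i := by
  have hsymm : v ⬝ᵥ G *ᵥ Pi.single i t = t * (G *ᵥ v) i := by
    rw [dotProduct_mulVec, ← mulVec_transpose, hG.eq, dotProduct_single, mul_comm]
  have hdiag : (G *ᵥ Pi.single i t) i = G i i * t := dotProduct_single _ _ _
  rw [mulVec_add, add_dotProduct, dotProduct_add, dotProduct_add, hsymm, single_dotProduct,
    single_dotProduct, hdiag]
  ring

theorem two_mul_abs_mulVec_apply_le_diag_of_forall_le [DecidableEq ι] [CommRing R]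
    [LinearOrder R] [IsStrictOrderedRing R] {G : Matrix ι ι R} (hG : G.IsSymm) {a : ι → ℤ}
    (hmin : ∀ b : ι → ℤ, b ≠ 0 →
      (fun j => (a j : R)) ⬝ᵥ G *ᵥ (fun j => (a j : R)) ≤
        (fun j => (b j : R)) ⬝ᵥ G *ᵥ (fun j => (b j : R)))
    {i : ι} (hpos : a ≠ Pi.single i 1) (hneg : a ≠ -Pi.single i 1) :
    2 * |(G *ᵥ fun j => (a j : R)) i| ≤ G i i := by
  have hstep (t : ℤ) (ht : a + Pi.single i t ≠ 0) :
      0 ≤ 2 * t * (G *ᵥ fun j => (a j : R)) i + t * t * G i i := by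
    have hcast : (fun j => ((a + Pi.single i t : ι → ℤ) j : R)) =
        (fun j => (a j : R)) + Pi.single i (t : R) := by
      ext j
      by_cases h : j = i <;> simp [h]
    have := hmin _ ht
    rw [hcast, dotProduct_mulVec_add_single hG] at this
    linarith
  have hup := hstep 1 (by rwa [Ne, add_eq_zero_iff_eq_neg])
  have hdown := hstep (-1) (by rwa [Pi.single_neg, ← sub_eq_add_neg, sub_ne_zero])
  push_cast at hup hdown
  cases abs_cases ((G *ᵥ fun j => (a j : R)) i) <;> linarith

theorem abs_intCast_sub_dotProduct_lt_half [Field R] [LinearOrder R] [IsStrictOrderedRing R]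
    (z : ℤ) (u w : ι → R) (h : 2 * |(z : R) - u ⬝ᵥ w| ≤ 1 - u ⬝ᵥ u) :
    |(z : R) - u ⬝ᵥ w| < 1 / 2 := by
  rcases eq_or_ne u 0 with rfl | hu
  · simp only [zero_dotProduct, sub_zero, ← Int.cast_abs] at h ⊢
    have hz : |z| = 0 := by
      have : 2 * |z| ≤ 1 := by exact_mod_cast h
      have := abs_nonneg z
      omega
    simp [hz]
  · have hpos : 0 < u ⬝ᵥ u :=
      (Finset.sum_nonneg fun i _ => mul_self_nonneg (u i)).lt_of_ne'
        (dotProduct_self_eq_zero.not.mpr hu)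
    linarith

variable {n k : Type*} [Fintype k] [DecidableEq n]

theorem isSymm_one_sub_mul_transpose [CommRing R] (V : Matrix n k R) :
    (1 - V * Vᵀ).IsSymm :=
  isSymm_one.sub ((transpose_mul V Vᵀ).trans (by rw [transpose_transpose]))

theorem one_sub_mul_transpose_apply_self [CommRing R] (V : Matrix n k R) (i : n) :
    (1 - V * Vᵀ : Matrix n n R) i i = 1 - V i ⬝ᵥ V i := by
  rw [sub_apply, one_apply_eq, mul_apply']
  rfl

theorem one_sub_mul_transpose_mulVec [Fintype n] [CommRing R] (V : Matrix n k R) (w : n → R) :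
    (1 - V * Vᵀ) *ᵥ w = w - V *ᵥ (Vᵀ *ᵥ w) := by
  rw [sub_mulVec, one_mulVec, mulVec_mulVec]

end Matrix

theorem stmt_4_general {n k : ℕ} (V : Matrix (Fin n) (Fin k) ℝ)
    (G : Matrix (Fin n) (Fin n) ℝ)
    (hG : G = 1 - V * Vᵀ)
    (a : Fin n → ℤ)
    (hmin : ∀ b : Fin n → ℤ, b ≠ 0 →
      (fun i => (a i : ℝ)) ⬝ᵥ G.mulVec (fun i => (a i : ℝ)) ≤
      (fun i => (b i : ℝ)) ⬝ᵥ G.mulVec (fun i => (b i : ℝ))) :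
    (∃ x : Fin k → ℝ, (∀ i, (a i : ℝ) - 1/2 < V.mulVec x i ∧
        V.mulVec x i < (a i : ℝ) + 1/2) ∧
      ∀ i, a i = round (V.mulVec x i)) ∨
    (∃ j : Fin n, a = Pi.single j 1 ∨ a = -Pi.single j 1) := by
  subst hG
  by_cases hunit : ∃ j, a = Pi.single j 1 ∨ a = -Pi.single j 1
  · exact .inr hunit
  push Not at hunit
  set x := Vᵀ *ᵥ fun j => (a j : ℝ)
  have hclose (i : Fin n) : |(a i : ℝ) - (V *ᵥ x) i| < 1 / 2 := by
    have h := two_mul_abs_mulVec_apply_le_diag_of_forall_le (isSymm_one_sub_mul_transpose V)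
      hmin (hunit i).1 (hunit i).2
    rw [one_sub_mul_transpose_mulVec, one_sub_mul_transpose_apply_self] at h
    exact abs_intCast_sub_dotProduct_lt_half (a i) (V i) x h
  refine .inl ⟨x, fun i => ?_, fun i => ?_⟩
  · constructor <;> linarith [abs_sub_lt_iff.mp (hclose i)]
  · rw [eq_comm, round_eq_iff]
    constructor <;> linarith [abs_sub_lt_iff.mp (hclose i)]

theorem stmt_4 {n k : ℕ} (V : Matrix (Fin n) (Fin k) ℝ)
    (G : Matrix (Fin n) (Fin n) ℝ)
    (hG : G = 1 - V * Vᵀ) (hGpd : G.PosDef)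
    (a : Fin n → ℤ) (ha : a ≠ 0)
    (hmin : ∀ b : Fin n → ℤ, b ≠ 0 →
      (fun i => (a i : ℝ)) ⬝ᵥ G.mulVec (fun i => (a i : ℝ)) ≤
      (fun i => (b i : ℝ)) ⬝ᵥ G.mulVec (fun i => (b i : ℝ))) :
    (∃ x : Fin k → ℝ, (∀ i, (a i : ℝ) - 1/2 < V.mulVec x i ∧
        V.mulVec x i < (a i : ℝ) + 1/2) ∧
      ∀ i, a i = round (V.mulVec x i)) ∨
    (∃ j : Fin n, a = Pi.single j 1 ∨ a = -Pi.single j 1) :=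
  stmt_4_general V G hG a hmin
end

section
/- Let G = D - V Vᵀ be positive definite, where D is diagonal with positive diagonal entries and V ∈ ℝ^{n×k}. If a* ∈ ℤⁿ \ {0} minimizes aᵀ G a, then either there exists x ∈ ℝᵏ with a* - (1/2)·𝟙 < D⁻¹ V x < a* + (1/2)·𝟙 (hence a* = ⌈D⁻¹ V x⌋), or a* is ± a standard unit vector. -/
/-!
With `x = Vᵀ a` one has `(G a)ᵢ = dᵢ aᵢ - (V x)ᵢ`, so the coordinate `i` violates
`aᵢ - 1/2 < (V x)ᵢ / dᵢ < aᵢ + 1/2` exactly when `|(G a)ᵢ| ≥ dᵢ / 2`. Then, for the sign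
`t = ±1` opposite to that of `(G a)ᵢ`, replacing `a` by `a + t eᵢ` changes `aᵀ G a` by
`2 t (G a)ᵢ + Gᵢᵢ ≤ Gᵢᵢ - dᵢ = -‖Vᵢ‖² ≤ 0`. By minimality `a + t eᵢ = 0`, i.e. `a = ∓eᵢ`,
unless all these inequalities are equalities; but then `Vᵢ = 0`, `(G a)ᵢ = dᵢ aᵢ` and
`2 t aᵢ = -1`, which no integer `aᵢ` satisfies.
-/

open Matrix

namespace Matrix

variable {ι κ : Type*} [DecidableEq ι] [Fintype ι] [Fintype κ]

theorem IsSymm.dotProduct_mulVec_add_smul_single {R : Type*} [CommRing R] {G : Matrix ι ι R}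
    (hG : G.IsSymm) (v : ι → R) (i : ι) (t : R) :
    (v + t • Pi.single i 1) ⬝ᵥ G *ᵥ (v + t • Pi.single i 1) =
      v ⬝ᵥ G *ᵥ v + 2 * t * (G *ᵥ v) i + t ^ 2 * G i i := by
  have hcross : v ⬝ᵥ G.col i = (G *ᵥ v) i := by
    rw [← mulVec_single_one, dotProduct_mulVec, ← mulVec_transpose, hG.eq, dotProduct_single_one]
  simp only [add_dotProduct, dotProduct_add, mulVec_add, mulVec_smul, smul_dotProduct,
    dotProduct_smul, smul_eq_mul, single_one_dotProduct, mulVec_single_one, col_apply, hcross]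
  ring

omit [Fintype ι] in
theorem isSymm_diagonal_sub_mul_transpose (d : ι → ℝ) (V : Matrix ι κ ℝ) :
    (diagonal d - V * Vᵀ).IsSymm := by
  simp [IsSymm, transpose_sub, transpose_mul]

omit [Fintype ι] in
theorem diagonal_sub_mul_transpose_apply_self (d : ι → ℝ) (V : Matrix ι κ ℝ) (i : ι) :
    (diagonal d - V * Vᵀ) i i = d i - V i ⬝ᵥ V i := by
  simp [mul_apply', dotProduct]

theorem diagonal_sub_mul_transpose_mulVec_apply (d : ι → ℝ) (V : Matrix ι κ ℝ) (v : ι → ℝ)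
    (i : ι) : ((diagonal d - V * Vᵀ) *ᵥ v) i = d i * v i - (V *ᵥ (Vᵀ *ᵥ v)) i := by
  simp [sub_mulVec, mulVec_diagonal, mulVec_mulVec]

end Matrix

theorem intCast_add_smul_single {ι R : Type*} [DecidableEq ι] [Ring R] (a : ι → ℤ) (t : ℤ)
    (i : ι) :
    (fun j => ((a + t • Pi.single i 1 : ι → ℤ) j : R)) =
      (fun j => (a j : R)) + (t : R) • Pi.single i 1 := by
  ext j
  rcases eq_or_ne j i with rfl | hj <;> simp [*]

theorem abs_mul_sub_lt_half_iff {d y a : ℝ} (hd : 0 < d) :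
    (a - 1 / 2 < d⁻¹ * y ∧ d⁻¹ * y < a + 1 / 2) ↔ |d * a - y| < d / 2 := by
  rw [abs_sub_lt_iff, inv_mul_eq_div, lt_div_iff₀ hd, div_lt_iff₀ hd]
  constructor <;> rintro ⟨h₁, h₂⟩ <;> constructor <;> linarith

section DiagonalSubGram

variable {ι κ : Type*} [DecidableEq ι] [Fintype ι] [Fintype κ] {d : ι → ℝ} {V : Matrix ι κ ℝ}
  {G : Matrix ι ι ℝ} {a : ι → ℤ}

theorem add_smul_single_eq_zero_of_isMin (hG : G = diagonal d - V * Vᵀ)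
    (hmin : ∀ b : ι → ℤ, b ≠ 0 →
      (fun i => (a i : ℝ)) ⬝ᵥ G *ᵥ (fun i => (a i : ℝ)) ≤
      (fun i => (b i : ℝ)) ⬝ᵥ G *ᵥ (fun i => (b i : ℝ)))
    {i : ι} (hdi : d i ≠ 0) {t : ℤ} (ht : t ^ 2 = 1)
    (hti : 2 * t * (G *ᵥ fun j => (a j : ℝ)) i ≤ -d i) :
    a + t • Pi.single i 1 = 0 := by
  subst hG
  by_contra hb
  have hq := hmin _ hb
  have ht' : (t : ℝ) ^ 2 = 1 := by exact_mod_cast ht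
  rw [intCast_add_smul_single,
    (isSymm_diagonal_sub_mul_transpose d V).dotProduct_mulVec_add_smul_single,
    diagonal_sub_mul_transpose_apply_self, ht'] at hq
  set s := ((diagonal d - V * Vᵀ) *ᵥ fun j => (a j : ℝ)) i with hs
  have hVV : V i ⬝ᵥ V i = 0 :=
    le_antisymm (by linarith) (Finset.sum_nonneg fun j _ => mul_self_nonneg (V i j))
  have hsd : 2 * t * s + d i = 0 := by linarith
  have hsa : s = d i * a i := by
    rw [hs, diagonal_sub_mul_transpose_mulVec_apply]
    simp [mulVec, dotProduct_self_eq_zero.1 hVV]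
  have hodd : ((2 * t * a i + 1 : ℤ) : ℝ) = 0 := by
    refine (mul_eq_zero.1 ?_).resolve_left hdi
    push_cast
    linear_combination hsd - 2 * (t : ℝ) * hsa
  have := Int.cast_eq_zero.1 hodd
  rw [mul_assoc] at this
  omega

theorem eq_single_or_eq_neg_single_of_le_abs (hG : G = diagonal d - V * Vᵀ)
    (hmin : ∀ b : ι → ℤ, b ≠ 0 →
      (fun i => (a i : ℝ)) ⬝ᵥ G *ᵥ (fun i => (a i : ℝ)) ≤
      (fun i => (b i : ℝ)) ⬝ᵥ G *ᵥ (fun i => (b i : ℝ)))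
    {i : ι} (hdi : 0 < d i) (hi : d i / 2 ≤ |(G *ᵥ fun j => (a j : ℝ)) i|) :
    a = Pi.single i 1 ∨ a = -Pi.single i 1 := by
  rcases le_or_gt 0 ((G *ᵥ fun j => (a j : ℝ)) i) with hs | hs
  · rw [abs_of_nonneg hs] at hi
    have h := add_smul_single_eq_zero_of_isMin hG hmin hdi.ne' (t := -1) (by norm_num)
      (by push_cast; linarith)
    rw [neg_one_smul, ← sub_eq_add_neg, sub_eq_zero] at h
    exact .inl h
  · rw [abs_of_neg hs] at hi
    have h := add_smul_single_eq_zero_of_isMin hG hmin hdi.ne' (t := 1) (by norm_num)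
      (by push_cast; linarith)
    rw [one_smul] at h
    exact .inr (eq_neg_of_add_eq_zero_left h)

end DiagonalSubGram

theorem stmt_5_general {n k : ℕ} (V : Matrix (Fin n) (Fin k) ℝ)
    (d : Fin n → ℝ) (hd : ∀ i, 0 < d i)
    (G : Matrix (Fin n) (Fin n) ℝ)
    (hG : G = Matrix.diagonal d - V * Vᵀ)
    (a : Fin n → ℤ)
    (hmin : ∀ b : Fin n → ℤ, b ≠ 0 →
      (fun i => (a i : ℝ)) ⬝ᵥ G.mulVec (fun i => (a i : ℝ)) ≤
      (fun i => (b i : ℝ)) ⬝ᵥ G.mulVec (fun i => (b i : ℝ))) :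
    (∃ x : Fin k → ℝ, (∀ i, (a i : ℝ) - 1/2 < (d i)⁻¹ * V.mulVec x i ∧
        (d i)⁻¹ * V.mulVec x i < (a i : ℝ) + 1/2) ∧
      ∀ i, a i = round ((d i)⁻¹ * V.mulVec x i)) ∨
    (∃ j : Fin n, a = Pi.single j 1 ∨ a = -Pi.single j 1) := by
  by_cases h : ∀ i, |(G *ᵥ fun j => (a j : ℝ)) i| < d i / 2
  · have hx : ∀ i, (a i : ℝ) - 1 / 2 < (d i)⁻¹ * (V *ᵥ Vᵀ *ᵥ fun j => (a j : ℝ)) i ∧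
        (d i)⁻¹ * (V *ᵥ Vᵀ *ᵥ fun j => (a j : ℝ)) i < (a i : ℝ) + 1 / 2 := fun i => by
      rw [abs_mul_sub_lt_half_iff (hd i)]
      simpa only [hG, diagonal_sub_mul_transpose_mulVec_apply] using h i
    exact .inl ⟨_, hx, fun i => (round_eq_iff.2 ⟨(hx i).1.le, (hx i).2⟩).symm⟩
  · obtain ⟨i, hi⟩ := not_forall.1 h
    rw [not_lt] at hi
    exact .inr ⟨i, eq_single_or_eq_neg_single_of_le_abs hG hmin (hd i) hi⟩

theorem stmt_5 {n k : ℕ} (V : Matrix (Fin n) (Fin k) ℝ)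
    (d : Fin n → ℝ) (hd : ∀ i, 0 < d i)
    (G : Matrix (Fin n) (Fin n) ℝ)
    (hG : G = Matrix.diagonal d - V * Vᵀ) (hGpd : G.PosDef)
    (a : Fin n → ℤ) (ha : a ≠ 0)
    (hmin : ∀ b : Fin n → ℤ, b ≠ 0 →
      (fun i => (a i : ℝ)) ⬝ᵥ G.mulVec (fun i => (a i : ℝ)) ≤
      (fun i => (b i : ℝ)) ⬝ᵥ G.mulVec (fun i => (b i : ℝ))) :
    (∃ x : Fin k → ℝ, (∀ i, (a i : ℝ) - 1/2 < (d i)⁻¹ * V.mulVec x i ∧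
        (d i)⁻¹ * V.mulVec x i < (a i : ℝ) + 1/2) ∧
      ∀ i, a i = round ((d i)⁻¹ * V.mulVec x i)) ∨
    (∃ j : Fin n, a = Pi.single j 1 ∨ a = -Pi.single j 1) :=
  stmt_5_general V d hd G hG a hmin
end

section
/- Let G be positive definite, y ∈ ℝⁿ, z = Aᵀy where AᵀA = G, and define f(a) = aᵀ G a - 2 zᵀ a + yᵀy. If a* ∈ ℤⁿ minimizes f over ℤⁿ, then for every index j, a*_j is a nearest integer to (z_j + Σ_{i≠j} (-G_{ij}) a*_i) / G_{jj}, i.e., a*_j ∈ {⌈r_j⌋, ⌊r_j⌉} where r_j = (z_j - Σ_{i≠j} G_{ij} a*_i)/G_{jj}. -/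
/-!
With all other coordinates fixed, `f` is the parabola
`G j j * t ^ 2 - 2 * (z j - ∑ i ≠ j, G j i * a i) * t + const` in the `j`-th coordinate `t`
(the cross terms combine because `G` is symmetric). Comparing `f a` with the values at
`a j ± 1` puts `a j` within `1/2` of the vertex `r j`, and an integer that close to `r j` is
one of its two roundings.
-/

open Matrix BigOperators

theorem eq_round_or_eq_neg_round_neg_of_abs_sub_le_half {r : ℝ} {m : ℤ} (h : |r - m| ≤ 1 / 2) :
    m = round r ∨ m = -round (-r) := by
  obtain ⟨hlo, hhi⟩ := abs_le.mp h
  rcases hhi.lt_or_eq with hlt | heq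
  · left
    exact (round_eq_iff.mpr ⟨by linarith, by linarith⟩).symm
  · right
    have : round (-r) = -m := round_eq_iff.mpr ⟨by push_cast; linarith, by push_cast; linarith⟩
    rw [this, neg_neg]

theorem abs_div_sub_le_half_of_forall_le {α c : ℝ} (hα : 0 < α) {m : ℤ}
    (hmin : ∀ t : ℤ, α * m ^ 2 - 2 * c * m ≤ α * t ^ 2 - 2 * c * t) :
    |c / α - m| ≤ 1 / 2 := by
  have hup := hmin (m + 1)
  have hdown := hmin (m - 1)
  push_cast at hup hdown
  rw [abs_le, le_sub_iff_add_le, sub_le_iff_le_add, div_le_iff₀ hα, le_div_iff₀ hα]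
  constructor <;> nlinarith

section UpdateCoordinate

variable {ι R : Type*} [DecidableEq ι]

theorem update_eq_update_zero_add_single [AddZeroClass R] (v : ι → R) (j : ι) (t : R) :
    Function.update v j t = Function.update v j 0 + Pi.single j t := by
  ext i
  rcases eq_or_ne i j with rfl | hi <;> simp [*]

variable [Fintype ι]

theorem dotProduct_update [NonUnitalNonAssocSemiring R] (z v : ι → R) (j : ι) (t : R) :
    z ⬝ᵥ Function.update v j t = z j * t + z ⬝ᵥ Function.update v j 0 := by
  rw [update_eq_update_zero_add_single, dotProduct_add, dotProduct_single, add_comm]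

theorem Matrix.IsSymm.update_dotProduct_mulVec_update [CommRing R] {G : Matrix ι ι R}
    (hG : G.IsSymm) (v : ι → R) (j : ι) (t : R) :
    Function.update v j t ⬝ᵥ G *ᵥ Function.update v j t =
      G j j * t ^ 2 + 2 * (∑ i ∈ Finset.univ.erase j, G j i * v i) * t +
        Function.update v j 0 ⬝ᵥ G *ᵥ Function.update v j 0 := by
  set w := Function.update v j 0
  have hGw : (G *ᵥ w) j = ∑ i ∈ Finset.univ.erase j, G j i * v i := by
    rw [mulVec, dotProduct, ← Finset.add_sum_erase _ _ (Finset.mem_univ j)]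
    simp only [w, Function.update_self, mul_zero, zero_add]
    refine Finset.sum_congr rfl fun i hi => ?_
    rw [Function.update_of_ne (Finset.ne_of_mem_erase hi)]
  have hwGs : w ⬝ᵥ G *ᵥ Pi.single j t = (G *ᵥ w) j * t := by
    rw [dotProduct_mulVec, ← mulVec_transpose, hG.eq, dotProduct_single]
  rw [update_eq_update_zero_add_single, mulVec_add, dotProduct_add, add_dotProduct,
    add_dotProduct, hwGs, single_dotProduct, single_dotProduct, mulVec_single, hGw]
  simp only [Pi.smul_apply, col_apply, op_smul_eq_mul]
  ring

end UpdateCoordinate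

theorem stmt_13_general {n : ℕ} (G : Matrix (Fin n) (Fin n) ℝ)
    (hGpd : G.PosDef)
    (y z : Fin n → ℝ)
    (f : (Fin n → ℤ) → ℝ)
    (hf : f = fun b => (fun i => (b i : ℝ)) ⬝ᵥ G.mulVec (fun i => (b i : ℝ)) -
      2 * (z ⬝ᵥ fun i => (b i : ℝ)) + y ⬝ᵥ y)
    (a : Fin n → ℤ) (hmin : ∀ b : Fin n → ℤ, f a ≤ f b) :
    ∀ j : Fin n,
      a j = round ((z j - ∑ i ∈ Finset.univ.erase j, G j i * (a i : ℝ)) / G j j) ∨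
      a j = -round (-((z j - ∑ i ∈ Finset.univ.erase j, G j i * (a i : ℝ)) / G j j)) := by
  intro j
  set S := ∑ i ∈ Finset.univ.erase j, G j i * (a i : ℝ)
  set u : Fin n → ℝ := fun i => (a i : ℝ)
  have hsymm : G.IsSymm := isHermitian_iff_isSymm.mp hGpd.isHermitian
  have hcoord (t : ℤ) : f (Function.update a j t) = G j j * t ^ 2 - 2 * (z j - S) * t +
      (Function.update u j 0 ⬝ᵥ G *ᵥ Function.update u j 0 -
        2 * (z ⬝ᵥ Function.update u j 0) + y ⬝ᵥ y) := by
    have hcast : (fun i => ((Function.update a j t i : ℤ) : ℝ)) = Function.update u j (t : ℝ) :=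
      Function.comp_update Int.cast a j t
    rw [hf]
    dsimp only
    rw [hcast, hsymm.update_dotProduct_mulVec_update, dotProduct_update z u]
    ring
  have hmin' (t : ℤ) : G j j * (a j : ℝ) ^ 2 - 2 * (z j - S) * a j ≤
      G j j * (t : ℝ) ^ 2 - 2 * (z j - S) * t := by
    have hself := hcoord (a j)
    rw [Function.update_eq_self] at hself
    have := hmin (Function.update a j t)
    rw [hself, hcoord] at this
    linarith
  exact eq_round_or_eq_neg_round_neg_of_abs_sub_le_half
    (abs_div_sub_le_half_of_forall_le hGpd.diag_pos hmin')

/-- ⌈·⌋ is `round` (half-integers up); ⌊·⌉ (half-integers down) is `-round (-x)`. -/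
theorem stmt_13 {n : ℕ} (A G : Matrix (Fin n) (Fin n) ℝ)
    (hG : G = Aᵀ * A) (hGpd : G.PosDef)
    (y z : Fin n → ℝ) (hz : z = Aᵀ.mulVec y)
    (f : (Fin n → ℤ) → ℝ)
    (hf : f = fun b => (fun i => (b i : ℝ)) ⬝ᵥ G.mulVec (fun i => (b i : ℝ)) -
      2 * (z ⬝ᵥ fun i => (b i : ℝ)) + y ⬝ᵥ y)
    (a : Fin n → ℤ) (hmin : ∀ b : Fin n → ℤ, f a ≤ f b) :
    ∀ j : Fin n,
      a j = round ((z j - ∑ i ∈ Finset.univ.erase j, G j i * (a i : ℝ)) / G j j) ∨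
      a j = -round (-((z j - ∑ i ∈ Finset.univ.erase j, G j i * (a i : ℝ)) / G j j)) :=
  stmt_13_general G hGpd y z f hf a hmin
end

section
/- Let a* minimize aᵀ G a over ℤⁿ \ {0} for a positive-definite matrix G with smallest eigenvalue λ_min and let d_min = min_{a ∈ ℤⁿ\{0}} ‖A a‖ where AᵀA = G. Suppose an algorithm returns â ∈ ℤⁿ achieving ‖A â - y‖² ≤ (1/(1-γ)) min_{a∈ℤⁿ} ‖A a - y‖² for y = A x + z with x ∈ ℤⁿ. If ‖z‖ < d_min / (1 + 1/√(1-γ)), then â = x. -/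
/-! A wrong decoding `â ≠ x` differs from `x` by a nonzero lattice vector, so `‖A â - A x‖ ≥ d_min`.
The approximation guarantee, tested against the candidate `x` whose residual is `z`, gives
`‖A â - y‖ ≤ ‖z‖ / √(1 - γ)`, and the triangle inequality through `y` then yields
`d_min ≤ (1 + 1/√(1 - γ)) ‖z‖`, contradicting the bound on the noise. -/

open Matrix BigOperators

theorem eq_of_dist_le_of_separated {ι X : Type*} [PseudoMetricSpace X] (f : ι → X)
    {a b : ι} {y : X} {d K r : ℝ} (hsep : a ≠ b → d ≤ dist (f a) (f b))
    (ha : dist (f a) y ≤ K * r) (hb : dist (f b) y ≤ r) (hr : (1 + K) * r < d) : a = b := by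
  by_contra hab
  linarith [hsep hab, dist_triangle_right (f a) (f b) y]

theorem EuclideanSpace.dist_toLp_eq_sqrt_sum_sq {ι : Type*} [Fintype ι] (u v : ι → ℝ) :
    dist (WithLp.toLp 2 u : EuclideanSpace ℝ ι) (WithLp.toLp 2 v) = √(∑ i, (u i - v i) ^ 2) := by
  simp only [EuclideanSpace.dist_eq, Real.dist_eq, sq_abs]

theorem Matrix.mulVec_intCast_sub {m n R : Type*} [Fintype n] [Ring R] (A : Matrix m n R)
    (a b : n → ℤ) :
    A *ᵥ (fun i => ((a - b) i : R)) = A *ᵥ (fun i => (a i : R)) - A *ᵥ (fun i => (b i : R)) := by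
  rw [← mulVec_sub]
  congr 1
  ext i
  simp

theorem stmt_18_general {n : ℕ} (A : Matrix (Fin n) (Fin n) ℝ)
    (γ : ℝ) (hγ1 : γ < 1)
    (dmin : ℝ)
    (hd : ∀ a : Fin n → ℤ, a ≠ 0 →
      dmin ≤ Real.sqrt (∑ j, (A.mulVec (fun i => (a i : ℝ)) j) ^ 2))
    (x : Fin n → ℤ) (z : Fin n → ℝ) (y : Fin n → ℝ)
    (hy : y = fun j => A.mulVec (fun i => (x i : ℝ)) j + z j)
    (ah : Fin n → ℤ)
    (happrox : ∀ a : Fin n → ℤ,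
      ∑ j, (A.mulVec (fun i => (ah i : ℝ)) j - y j) ^ 2 ≤
      (1 / (1 - γ)) * ∑ j, (A.mulVec (fun i => (a i : ℝ)) j - y j) ^ 2)
    (hz : Real.sqrt (∑ j, z j ^ 2) < dmin / (1 + 1 / Real.sqrt (1 - γ))) :
    ah = x := by
  let L : (Fin n → ℤ) → EuclideanSpace ℝ (Fin n) :=
    fun a => WithLp.toLp 2 (A *ᵥ fun i => (a i : ℝ))
  have hdist (a : Fin n → ℤ) (v : Fin n → ℝ) :
      dist (L a) (WithLp.toLp 2 v) = √(∑ j, ((A *ᵥ fun i => (a i : ℝ)) j - v j) ^ 2) :=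
    EuclideanSpace.dist_toLp_eq_sqrt_sum_sq _ _
  have hres_x : ∑ j, ((A *ᵥ fun i => (x i : ℝ)) j - y j) ^ 2 = ∑ j, z j ^ 2 := by
    subst hy
    exact Finset.sum_congr rfl fun j _ => by ring
  refine eq_of_dist_le_of_separated L (y := WithLp.toLp 2 y) (d := dmin) (K := 1 / √(1 - γ))
    (r := √(∑ j, z j ^ 2)) (fun hne => ?_) ?_ (by rw [hdist, hres_x]) ?_
  · have hlattice := hd (ah - x) (sub_ne_zero.mpr hne)
    rw [mulVec_intCast_sub] at hlattice
    simpa only [Pi.sub_apply, L, EuclideanSpace.dist_toLp_eq_sqrt_sum_sq] using hlattice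
  · calc dist (L ah) (WithLp.toLp 2 y) ≤ √(1 / (1 - γ) * ∑ j, z j ^ 2) := by
          rw [hdist, ← hres_x]
          exact Real.sqrt_le_sqrt (happrox x)
      _ = 1 / √(1 - γ) * √(∑ j, z j ^ 2) := by
          rw [Real.sqrt_mul (one_div_nonneg.mpr (sub_nonneg.mpr hγ1.le)), Real.sqrt_div zero_le_one,
            Real.sqrt_one]
  · rwa [← lt_div_iff₀' (by positivity)]

theorem stmt_18 {n : ℕ} (A : Matrix (Fin n) (Fin n) ℝ) (hA : IsUnit A.det)
    (γ : ℝ) (hγ0 : 0 ≤ γ) (hγ1 : γ < 1)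
    (dmin : ℝ)
    (hd : ∀ a : Fin n → ℤ, a ≠ 0 →
      dmin ≤ Real.sqrt (∑ j, (A.mulVec (fun i => (a i : ℝ)) j) ^ 2))
    (x : Fin n → ℤ) (z : Fin n → ℝ) (y : Fin n → ℝ)
    (hy : y = fun j => A.mulVec (fun i => (x i : ℝ)) j + z j)
    (ah : Fin n → ℤ)
    (happrox : ∀ a : Fin n → ℤ,
      ∑ j, (A.mulVec (fun i => (ah i : ℝ)) j - y j) ^ 2 ≤
      (1 / (1 - γ)) * ∑ j, (A.mulVec (fun i => (a i : ℝ)) j - y j) ^ 2)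
    (hz : Real.sqrt (∑ j, z j ^ 2) < dmin / (1 + 1 / Real.sqrt (1 - γ))) :
    ah = x :=
  stmt_18_general A γ hγ1 dmin hd x z y hy ah happrox hz
end
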